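/- Let G be a connected multigraph with at least 4 vertices. For any minimum restricted edge-cut F (a λ'-cut), the graph G − F has exactly two components, each with at least two vertices. -/

import Mathlib

/-- A multigraph: multiple edges allowed (recorded as edge multiplicities), no loops. -/
structure Multigraph (V : Type*) where
  mult : V → V → ℕ
  symm : ∀ u v, mult u v = mult v u
  loopless : ∀ v, mult v v = 0

namespace Multigraph

variable {V : Type*}

/-- Adjacency: at least one edge between `u` and `v`. -/
def Adj (G : Multigraph V) (u v : V) : Prop := 0 < G.mult u v

instance (G : Multigraph V) (v : V) : DecidablePred (G.Adj v) :=
  fun u => inferInstanceAs (Decidable (0 < G.mult v u))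

/-- Reachability by walks. -/
def Reachable (G : Multigraph V) : V → V → Prop := Relation.ReflTransGen G.Adj

/-- A multigraph is connected if it is nonempty and every two vertices are joined by a walk. -/
def Connected (G : Multigraph V) : Prop := Nonempty V ∧ ∀ u v, G.Reachable u v

/-- An automorphism of a multigraph: a permutation preserving all edge multiplicities. -/
def Aut (G : Multigraph V) : Type _ :=
  {e : Equiv.Perm V // ∀ u v, G.mult (e u) (e v) = G.mult u v}

/-- A set of edges of `G`, given by sub-multiplicities. -/
structure EdgeSub (G : Multigraph V) where
  f : V → V → ℕ
  symm : ∀ u v, f u v = f v u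
  le : ∀ u v, f u v ≤ G.mult u v

/-- The multigraph obtained by deleting the edge set `F`. -/
def deleteEdges (G : Multigraph V) (F : G.EdgeSub) : Multigraph V where
  mult u v := G.mult u v - F.f u v
  symm u v := by rw [G.symm u v, F.symm u v]
  loopless v := by simp [G.loopless v]

/-- `F` is an edge-cut if removing it disconnects `G`. -/
def IsEdgeCut (G : Multigraph V) (F : G.EdgeSub) : Prop := ¬ (G.deleteEdges F).Connected

/-- `F` is a restricted edge-cut if removing it disconnects `G` and leaves no isolated vertex. -/
def IsRestrictedEdgeCut (G : Multigraph V) (F : G.EdgeSub) : Prop :=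
  G.IsEdgeCut F ∧ ∀ v, ∃ u, (G.deleteEdges F).Adj v u

/-- `G` is bipartite with parts `V₁`, `V₂`. -/
def IsBipartition [DecidableEq V] [Fintype V] (G : Multigraph V) (V₁ V₂ : Finset V) : Prop :=
  Disjoint V₁ V₂ ∧ V₁ ∪ V₂ = Finset.univ ∧ ∀ u v, G.Adj u v → (u ∈ V₁ ↔ v ∈ V₂)

/-- A bipartite multigraph is half-transitive if `Aut G` is transitive on each part. -/
def IsHalfTransitive [DecidableEq V] [Fintype V] (G : Multigraph V) (V₁ V₂ : Finset V) : Prop :=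
  G.IsBipartition V₁ V₂ ∧
  (∀ u ∈ V₁, ∀ v ∈ V₁, ∃ e : G.Aut, e.1 u = v) ∧
  (∀ u ∈ V₂, ∀ v ∈ V₂, ∃ e : G.Aut, e.1 u = v)

/-- An imprimitive block for `Aut G`. -/
def IsImprimitiveBlock [DecidableEq V] (G : Multigraph V) (A : Finset V) [Fintype V] : Prop :=
  A.Nonempty ∧ A ≠ Finset.univ ∧
  ∀ e : G.Aut, A.image e.1 = A ∨ Disjoint (A.image e.1) A

/-- The induced sub-multigraph on a vertex set `S`. -/
def induce (G : Multigraph V) (S : Finset V) : Multigraph {x // x ∈ S} where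
  mult a b := G.mult a.1 b.1
  symm a b := G.symm a.1 b.1
  loopless a := G.loopless a.1

section Fin

variable [Fintype V] [DecidableEq V]

/-- The degree of a vertex (counting multiplicities). -/
def degree (G : Multigraph V) (v : V) : ℕ := ∑ u, G.mult v u

/-- The minimum degree `δ(G)`. -/
noncomputable def minDegree (G : Multigraph V) : ℕ := sInf {n | ∃ v, G.degree v = n}

/-- The maximum edge multiplicity `μ(G)`. -/
def maxMult (G : Multigraph V) : ℕ := Finset.univ.sup fun p : V × V => G.mult p.1 p.2

/-- `d(A)`: the number of edges between `A` and its complement. -/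
def cut (G : Multigraph V) (A : Finset V) : ℕ := ∑ u ∈ A, ∑ v ∈ Aᶜ, G.mult u v

/-- The number of edges in an edge set. -/
def EdgeSub.card {G : Multigraph V} (F : G.EdgeSub) : ℕ := (∑ u, ∑ v, F.f u v) / 2

/-- The edge-boundary `N(A)` of a vertex set `A`, as an edge set. -/
def boundary (G : Multigraph V) (A : Finset V) : G.EdgeSub where
  f u v := if (u ∈ A ∧ v ∉ A) ∨ (v ∈ A ∧ u ∉ A) then G.mult u v else 0
  symm u v := by
    try dsimp only
    by_cases h1 : u ∈ A <;> by_cases h2 : v ∈ A <;> simp [h1, h2, G.symm u v]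
  le u v := by split_ifs <;> simp

/-- The edge-connectivity `λ(G)`. -/
noncomputable def edgeConn (G : Multigraph V) : ℕ :=
  sInf {n | ∃ F : G.EdgeSub, G.IsEdgeCut F ∧ F.card = n}

/-- The restricted edge-connectivity `λ'(G)`. -/
noncomputable def rEdgeConn (G : Multigraph V) : ℕ :=
  sInf {n | ∃ F : G.EdgeSub, G.IsRestrictedEdgeCut F ∧ F.card = n}

/-- The minimum edge degree `ξ(G) = min {d(u)+d(v)-2μ(uv) : uv ∈ E}`. -/
noncomputable def minEdgeDegree (G : Multigraph V) : ℕ :=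
  sInf {n | ∃ u v, G.Adj u v ∧ n = G.degree u + G.degree v - 2 * G.mult u v}

/-- A `λ`-fragment: a vertex set whose edge-boundary is a minimum edge-cut. -/
def IsFragment (G : Multigraph V) (A : Finset V) : Prop :=
  A.Nonempty ∧ Aᶜ.Nonempty ∧ G.IsEdgeCut (G.boundary A) ∧ G.cut A = G.edgeConn

/-- A `λ`-atom: a `λ`-fragment of minimum cardinality. -/
def IsAtom (G : Multigraph V) (A : Finset V) : Prop :=
  G.IsFragment A ∧ ∀ B : Finset V, G.IsFragment B → A.card ≤ B.card

/-- A strict `λ`-fragment: a `λ`-fragment `C` with `2 ≤ |C| ≤ |V| - 2`. -/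
def IsStrictFragment (G : Multigraph V) (A : Finset V) : Prop :=
  G.IsFragment A ∧ 2 ≤ A.card ∧ A.card ≤ Fintype.card V - 2

/-- A `λ`-superatom: a strict `λ`-fragment of minimum cardinality. -/
def IsSuperAtom (G : Multigraph V) (A : Finset V) : Prop :=
  G.IsStrictFragment A ∧ ∀ B : Finset V, G.IsStrictFragment B → A.card ≤ B.card

/-- A `λ'`-fragment: a vertex set whose edge-boundary is a minimum restricted edge-cut. -/
def IsRFragment (G : Multigraph V) (A : Finset V) : Prop :=
  G.IsRestrictedEdgeCut (G.boundary A) ∧ G.cut A = G.rEdgeConn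

/-- A `λ'`-atom: a `λ'`-fragment of minimum cardinality. -/
def IsRAtom (G : Multigraph V) (A : Finset V) : Prop :=
  G.IsRFragment A ∧ ∀ B : Finset V, G.IsRFragment B → A.card ≤ B.card

/-- `G` is super edge-connected if every minimum edge-cut is the set of all edges
incident with some vertex. -/
def IsSuperEdgeConnected (G : Multigraph V) : Prop :=
  ∀ F : G.EdgeSub, G.IsEdgeCut F → F.card = G.edgeConn →
    ∃ v : V, ∀ u w : V, F.f u w = if u = v ∨ w = v then G.mult u w else 0

end Fin

end Multigraph

variable {V : Type*} [Fintype V] [DecidableEq V]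

open Multigraph

/-!
Let `x`, `y` be disconnected in `G - F`, with components `A` and `B`. The boundary of a union
of components of `G - F` lies inside `F` and is again a restricted edge-cut, so minimality gives
`F = ∂A = ∂B`. An edge of `G` leaving `A ∪ B` would then lie in one of `∂A`, `∂B` but not in the
other, so `A ∪ B` is closed in the connected graph `G`, i.e. `B = Aᶜ`. Both components have two
vertices because `G - F` has no isolated vertex.
-/

namespace Multigraph

variable {V : Type*} {G : Multigraph V}

theorem Adj.symm {u v : V} (h : G.Adj u v) : G.Adj v u := by
  rwa [Adj, G.symm]

theorem Adj.ne {u v : V} (h : G.Adj u v) : u ≠ v := by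
  rintro rfl
  exact absurd h (by simp [Adj, G.loopless])

theorem Reachable.symm {u v : V} (h : G.Reachable u v) : G.Reachable v u := by
  induction h with
  | refl => exact .refl
  | tail _ hadj ih => exact .head hadj.symm ih

/-- `S` is a union of connected components of `G`. -/
def IsAdjClosed (G : Multigraph V) (S : Finset V) : Prop :=
  ∀ ⦃a b : V⦄, a ∈ S → G.Adj a b → b ∈ S

theorem IsAdjClosed.mem_of_reachable {S : Finset V} (hS : G.IsAdjClosed S) {a b : V}
    (ha : a ∈ S) (h : G.Reachable a b) : b ∈ S := by
  induction h with
  | refl => exact ha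
  | tail _ hadj ih => exact hS ih hadj

theorem Connected.eq_univ_of_isAdjClosed [Fintype V] (hG : G.Connected) {S : Finset V}
    (hS : G.IsAdjClosed S) (hne : S.Nonempty) : S = Finset.univ := by
  obtain ⟨a, ha⟩ := hne
  exact Finset.eq_univ_of_forall fun b => hS.mem_of_reachable ha (hG.2 a b)

theorem IsRestrictedEdgeCut.of_le {F F' : G.EdgeSub} (hF : G.IsRestrictedEdgeCut F)
    (hle : ∀ u v, F'.f u v ≤ F.f u v) (hF' : G.IsEdgeCut F') : G.IsRestrictedEdgeCut F' :=
  ⟨hF', fun v => (hF.2 v).imp fun u hu => hu.trans_le (Nat.sub_le_sub_left (hle v u) _)⟩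

section Finite

variable [Fintype V]

open Classical in
noncomputable def component (G : Multigraph V) (x : V) : Finset V :=
  Finset.univ.filter (G.Reachable x)

theorem mem_component {x v : V} : v ∈ G.component x ↔ G.Reachable x v := by
  simp [component]

theorem mem_component_self (x : V) : x ∈ G.component x :=
  mem_component.2 Relation.ReflTransGen.refl

theorem isAdjClosed_component (x : V) : G.IsAdjClosed (G.component x) :=
  fun _ _ ha hab => mem_component.2 ((mem_component.1 ha).tail hab)

theorem reachable_of_mem_component {x u v : V} (hu : u ∈ G.component x)
    (hv : v ∈ G.component x) : G.Reachable u v :=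
  (mem_component.1 hu).symm.trans (mem_component.1 hv)

theorem not_reachable_of_mem_component_of_notMem {x u v : V} (hu : u ∈ G.component x)
    (hv : v ∉ G.component x) : ¬ G.Reachable u v :=
  fun h => hv ((isAdjClosed_component x).mem_of_reachable hu h)

theorem disjoint_component {x y : V} (h : ¬ G.Reachable x y) :
    Disjoint (G.component x) (G.component y) :=
  Finset.disjoint_left.2 fun _ hx hy => h ((mem_component.1 hx).trans (mem_component.1 hy).symm)

theorem two_le_card_component {x u : V} (hxu : G.Adj x u) : 2 ≤ (G.component x).card :=
  Finset.one_lt_card_iff.2 ⟨x, u, mem_component_self x,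
    isAdjClosed_component x (mem_component_self x) hxu, hxu.ne⟩

/-- The double sum in `EdgeSub.card` counts each edge twice, so the two sums differ by at least
`2` and the halving keeps the inequality strict. -/
theorem EdgeSub.card_lt_card {F F' : G.EdgeSub} (hle : ∀ u v, F'.f u v ≤ F.f u v) {u v : V}
    (hne : F'.f u v ≠ F.f u v) : F'.card < F.card := by
  classical
  have huv : u ≠ v := by
    rintro rfl
    have h₁ := F.le u u
    have h₂ := F'.le u u
    rw [G.loopless] at h₁ h₂
    omega
  set d : V → V → ℕ := fun a b => F.f a b - F'.f a b
  have hsplit : ∑ a, ∑ b, F.f a b = ∑ a, ∑ b, F'.f a b + ∑ a, ∑ b, d a b := by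
    simp only [d, ← Finset.sum_add_distrib]
    exact Finset.sum_congr rfl fun a _ => Finset.sum_congr rfl fun b _ => by
      have := hle a b; omega
  have hrow : ∀ a b, d a b ≤ ∑ c, d a c := fun a b =>
    Finset.single_le_sum (fun _ _ => Nat.zero_le _) (Finset.mem_univ b)
  have hpair : ∑ c, d u c + ∑ c, d v c ≤ ∑ a, ∑ c, d a c := by
    have := Finset.sum_le_sum_of_subset (f := fun a => ∑ c, d a c) (Finset.subset_univ {u, v})
    rwa [Finset.sum_pair huv] at this
  have hduv : 0 < d u v := Nat.sub_pos_of_lt (lt_of_le_of_ne (hle u v) hne)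
  have hdvu : 0 < d v u := by simp only [d]; rw [F.symm, F'.symm]; exact hduv
  have := hrow u v
  have := hrow v u
  simp only [EdgeSub.card]
  omega

theorem rEdgeConn_le {F : G.EdgeSub} (hF : G.IsRestrictedEdgeCut F) : G.rEdgeConn ≤ F.card :=
  Nat.sInf_le ⟨F, hF, rfl⟩

end Finite

section Boundary

variable [DecidableEq V]

theorem boundary_f_of_mem_of_notMem (S : Finset V) {a b : V} (ha : a ∈ S) (hb : b ∉ S) :
    (G.boundary S).f a b = G.mult a b := by
  simp [boundary, ha, hb]

theorem boundary_f_of_notMem_of_notMem (S : Finset V) {a b : V} (ha : a ∉ S) (hb : b ∉ S) :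
    (G.boundary S).f a b = 0 := by
  simp [boundary, ha, hb]

theorem isAdjClosed_deleteEdges_boundary (S : Finset V) :
    (G.deleteEdges (G.boundary S)).IsAdjClosed S := by
  intro a b ha hab
  by_contra hb
  have : (G.deleteEdges (G.boundary S)).mult a b = 0 := by
    simp [deleteEdges, boundary_f_of_mem_of_notMem S ha hb]
  exact absurd hab (by simp [Adj, this])

theorem boundary_le_of_isAdjClosed {F : G.EdgeSub} {S : Finset V}
    (hS : (G.deleteEdges F).IsAdjClosed S) (u v : V) : (G.boundary S).f u v ≤ F.f u v := by
  have hcross : ∀ a ∈ S, ∀ b ∉ S, G.mult a b ≤ F.f a b := fun a ha b hb => by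
    by_contra! h
    exact hb (hS ha (Nat.sub_pos_of_lt h))
  simp only [boundary]
  split_ifs with h
  · rcases h with ⟨hu, hv⟩ | ⟨hv, hu⟩
    · exact hcross u hu v hv
    · rw [G.symm, F.symm]; exact hcross v hv u hu
  · exact Nat.zero_le _

theorem isAdjClosed_union_of_boundary_eq {A B : Finset V} (hAB : Disjoint A B)
    (h : (G.boundary A).f = (G.boundary B).f) : G.IsAdjClosed (A ∪ B) := by
  intro a b ha hab
  by_contra hb
  rw [Finset.mem_union, not_or] at hb
  have hab' := congrFun₂ h a b
  rcases Finset.mem_union.1 ha with ha | ha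
  · rw [boundary_f_of_mem_of_notMem A ha hb.1,
      boundary_f_of_notMem_of_notMem B (Finset.disjoint_left.1 hAB ha) hb.2] at hab'
    exact absurd hab (by simp [Adj, hab'])
  · rw [boundary_f_of_notMem_of_notMem A (Finset.disjoint_right.1 hAB ha) hb.1,
      boundary_f_of_mem_of_notMem B ha hb.2] at hab'
    exact absurd hab (by simp [Adj, ← hab'])

variable [Fintype V]

theorem isEdgeCut_boundary {S : Finset V} (hS : S.Nonempty) (hSc : Sᶜ.Nonempty) :
    G.IsEdgeCut (G.boundary S) := by
  rintro hconn
  have := hconn.eq_univ_of_isAdjClosed (isAdjClosed_deleteEdges_boundary S) hS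
  simp [this] at hSc

/-- The boundary of `S` lies inside `F` and is itself a restricted edge-cut, so the minimality
of `F` forces equality. -/
theorem eq_boundary_of_isAdjClosed {F : G.EdgeSub} (hF : G.IsRestrictedEdgeCut F)
    (hmin : F.card = G.rEdgeConn) {S : Finset V} (hS : (G.deleteEdges F).IsAdjClosed S)
    (hne : S.Nonempty) (hcne : Sᶜ.Nonempty) : F.f = (G.boundary S).f := by
  have hle := boundary_le_of_isAdjClosed hS
  have hcut := hF.of_le hle (isEdgeCut_boundary hne hcne)
  by_contra hne'
  obtain ⟨u, v, huv⟩ : ∃ u v, (G.boundary S).f u v ≠ F.f u v := by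
    by_contra! h
    exact hne' (funext₂ fun u v => (h u v).symm)
  have := EdgeSub.card_lt_card hle huv
  have := rEdgeConn_le hcut
  omega

end Boundary

end Multigraph

theorem rCut_two_components_general (G : Multigraph V) (hG : G.Connected)
    (F : G.EdgeSub)
    (hF : G.IsRestrictedEdgeCut F) (hmin : F.card = G.rEdgeConn) :
    ∃ A : Finset V, 2 ≤ A.card ∧ 2 ≤ Aᶜ.card ∧
      (∀ u ∈ A, ∀ v ∈ A, (G.deleteEdges F).Reachable u v) ∧
      (∀ u ∈ Aᶜ, ∀ v ∈ Aᶜ, (G.deleteEdges F).Reachable u v) ∧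
      (∀ u ∈ A, ∀ v ∈ Aᶜ, ¬ (G.deleteEdges F).Reachable u v) := by
  set H := G.deleteEdges F
  obtain ⟨x, y, hxy⟩ : ∃ x y, ¬ H.Reachable x y := by
    by_contra! h
    exact hF.1 ⟨hG.1, h⟩
  have hx : F.f = (G.boundary (H.component x)).f :=
    eq_boundary_of_isAdjClosed hF hmin (isAdjClosed_component x) ⟨x, mem_component_self x⟩
      ⟨y, Finset.mem_compl.2 fun h => hxy (mem_component.1 h)⟩
  have hy : F.f = (G.boundary (H.component y)).f :=
    eq_boundary_of_isAdjClosed hF hmin (isAdjClosed_component y) ⟨y, mem_component_self y⟩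
      ⟨x, Finset.mem_compl.2 fun h => hxy (mem_component.1 h).symm⟩
  have hdisj := disjoint_component hxy
  have hcompl : (H.component x)ᶜ = H.component y := by
    refine IsCompl.compl_eq ⟨hdisj, codisjoint_iff.2 ?_⟩
    exact hG.eq_univ_of_isAdjClosed (isAdjClosed_union_of_boundary_eq hdisj (hx.symm.trans hy))
      (Finset.Nonempty.inl ⟨x, mem_component_self x⟩)
  refine ⟨H.component x, ?_⟩
  rw [hcompl]
  refine ⟨two_le_card_component (hF.2 x).choose_spec,
    two_le_card_component (hF.2 y).choose_spec, fun _ hu _ hv => reachable_of_mem_component hu hv,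
    fun _ hu _ hv => reachable_of_mem_component hu hv, fun _ hu _ hv => ?_⟩
  exact not_reachable_of_mem_component_of_notMem hu (Finset.disjoint_right.1 hdisj hv)

/-- Removing a minimum restricted edge-cut from a connected multigraph on at least four
vertices leaves exactly two components, each with at least two vertices. -/
theorem rCut_two_components (G : Multigraph V) (hG : G.Connected)
    (h4 : 4 ≤ Fintype.card V) (F : G.EdgeSub)
    (hF : G.IsRestrictedEdgeCut F) (hmin : F.card = G.rEdgeConn) :
    ∃ A : Finset V, 2 ≤ A.card ∧ 2 ≤ Aᶜ.card ∧
      (∀ u ∈ A, ∀ v ∈ A, (G.deleteEdges F).Reachable u v) ∧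
      (∀ u ∈ Aᶜ, ∀ v ∈ Aᶜ, (G.deleteEdges F).Reachable u v) ∧
      (∀ u ∈ A, ∀ v ∈ Aᶜ, ¬ (G.deleteEdges F).Reachable u v) :=
  rCut_two_components_general G hG F hF hmin
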